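/- arXiv:1903.02877 — 3 statements merged into one kernel-verified Lean document; each statement's English description precedes it below -/
import Mathlib

section
/- For every natural number n and every real number x, x^n = Σ_{k=0}^{n} S_B(n,k) · [x]^B_k, where [x]^B_k = (x-1)(x-3)⋯(x-2k+1) and [x]^B_0 = 1. -/
open Finset

/-- The set `[±n] = {±1, …, ±n}` as a finset of integers. -/
noncomputable def pmSet (n : ℕ) : Finset ℤ := (Finset.Icc (-(n:ℤ)) (n:ℤ)).erase 0

/-- Negation of a set: `-C`. -/
def negSet (C : Finset ℤ) : Finset ℤ := C.image (fun x => -x)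

/-- A signed partition of `[±n]`: a set partition of `[±n]` closed under block
negation, with at most one self-negative block (the zero-block). -/
def IsSignedPartition (n : ℕ) (P : Finpartition (pmSet n)) : Prop :=
  (∀ C ∈ P.parts, negSet C ∈ P.parts) ∧
  (P.parts.filter (fun C => negSet C = C)).card ≤ 1

/-- `SB n k`: the type-B Stirling number of the second kind, i.e. the number of
signed partitions of `[±n]` with exactly `k` pairs of nonzero blocks. -/
noncomputable def SB (n k : ℕ) : ℕ :=
  Nat.card {P : Finpartition (pmSet n) //
    IsSignedPartition n P ∧ (P.parts.filter (fun C => negSet C ≠ C)).card = 2 * k}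

/-! A signed partition of `[±n]` is determined by the map sending `x` to `0` if `x` lies in the
zero-block and otherwise to the element of least absolute value of its block; the nonzero blocks
correspond to the fixed points of this map. Removing `±(n+1)` then shows
`S_B(n+1, k+1) = S_B(n, k) + (2k+3) S_B(n, k+1)`: either `{n+1}` and `{-(n+1)}` form a new pair of
blocks, or `n+1` joins the zero-block or one of the `2(k+1)` nonzero blocks (and `-(n+1)` joins
the negated block). The coefficients of `x^n` in the basis `[x]^B_k` satisfy the same recurrence,
since `x [x]^B_k = [x]^B_{k+1} + (2k+1) [x]^B_k`. -/

lemma mem_pmSet {n : ℕ} {x : ℤ} : x ∈ pmSet n ↔ x ≠ 0 ∧ |x| ≤ n := by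
  simp [pmSet, abs_le, and_comm]

lemma zero_notMem_pmSet (n : ℕ) : (0 : ℤ) ∉ pmSet n := by
  simp [mem_pmSet]

lemma neg_mem_pmSet {n : ℕ} {x : ℤ} : -x ∈ pmSet n ↔ x ∈ pmSet n := by
  simp [mem_pmSet]

lemma pmSet_zero : pmSet 0 = ∅ := by
  ext x; simp [mem_pmSet]

lemma card_pmSet (n : ℕ) : #(pmSet n) = 2 * n := by
  rw [pmSet, card_erase_of_mem (by simp), Int.card_Icc]
  omega

lemma pmSet_succ (n : ℕ) :
    pmSet (n + 1) = insert ((n : ℤ) + 1) (insert (-((n : ℤ) + 1)) (pmSet n)) := by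
  ext x
  simp only [mem_insert, mem_pmSet, abs_le]
  push_cast
  omega

lemma natCast_succ_notMem_pmSet (n : ℕ) : (n : ℤ) + 1 ∉ pmSet n := by
  simp [mem_pmSet, abs_le]

lemma mem_negSet {C : Finset ℤ} {y : ℤ} : y ∈ negSet C ↔ -y ∈ C := by
  simp [negSet, neg_eq_iff_eq_neg]

lemma negSet_negSet (C : Finset ℤ) : negSet (negSet C) = C := by
  ext y; simp [mem_negSet]

noncomputable def absMinElt (C : Finset ℤ) : ℤ :=
  if h : C.Nonempty then (C.exists_min_image abs h).choose else 0

lemma absMinElt_mem {C : Finset ℤ} (h : C.Nonempty) : absMinElt C ∈ C := by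
  rw [absMinElt, dif_pos h]; exact (C.exists_min_image abs h).choose_spec.1

lemma abs_absMinElt_le {C : Finset ℤ} {y : ℤ} (hy : y ∈ C) : |absMinElt C| ≤ |y| := by
  rw [absMinElt, dif_pos ⟨y, hy⟩]; exact (C.exists_min_image abs ⟨y, hy⟩).choose_spec.2 y hy

lemma absMinElt_eq {C : Finset ℤ} {a : ℤ} (ha : a ∈ C) (hmin : ∀ y ∈ C, |a| ≤ |y|)
    (hneg : -a ∉ C) : absMinElt C = a := by
  have hmem := absMinElt_mem ⟨a, ha⟩
  have habs : |absMinElt C| = |a| := le_antisymm (abs_absMinElt_le ha) (hmin _ hmem)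
  rcases abs_eq_abs.mp habs with h | h
  · exact h
  · exact absurd (h ▸ hmem) hneg

lemma Finpartition.ext_part {α : Type*} [DecidableEq α] {s : Finset α} {P Q : Finpartition s}
    (h : ∀ a, P.part a = Q.part a) : P = Q := by
  suffices key : ∀ {P Q : Finpartition s}, (∀ a, P.part a = Q.part a) → P.parts ⊆ Q.parts from
    Finpartition.ext (Subset.antisymm (key h) (key fun a => (h a).symm))
  intro P Q h t ht
  obtain ⟨a, ha, rfl⟩ := P.part_surjOn ht
  rw [h]; exact Q.part_mem.mpr ha

namespace IsSignedPartition

variable {n : ℕ} {P : Finpartition (pmSet n)}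

lemma part_neg (hP : IsSignedPartition n P) (x : ℤ) : P.part (-x) = negSet (P.part x) := by
  by_cases hx : x ∈ pmSet n
  · refine P.part_eq_of_mem (hP.1 _ (P.part_mem.mpr hx)) ?_
    rw [mem_negSet, neg_neg]; exact P.mem_part hx
  · rw [P.part_eq_empty.mpr hx, P.part_eq_empty.mpr (by rwa [neg_mem_pmSet])]; rfl

lemma neg_notMem {C : Finset ℤ} (hP : IsSignedPartition n P) (hC : C ∈ P.parts)
    (hCneg : negSet C ≠ C) {a : ℤ} (ha : a ∈ C) : -a ∉ C := fun h =>
  hCneg (P.eq_of_mem_parts (hP.1 C hC) hC (mem_negSet.mpr h) ha)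

lemma absMinElt_negSet {C : Finset ℤ} (hP : IsSignedPartition n P) (hC : C ∈ P.parts)
    (hCneg : negSet C ≠ C) : absMinElt (negSet C) = -absMinElt C := by
  have ha := absMinElt_mem (P.nonempty_of_mem_parts hC)
  refine absMinElt_eq (by rwa [mem_negSet, neg_neg]) (fun y hy => ?_) ?_
  · rw [abs_neg, ← abs_neg y]; exact abs_absMinElt_le (mem_negSet.mp hy)
  · rw [mem_negSet, neg_neg]; exact hP.neg_notMem hC hCneg ha

lemma eq_of_negSet_eq {C D : Finset ℤ} (hP : IsSignedPartition n P) (hC : C ∈ P.parts)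
    (hD : D ∈ P.parts) (hCneg : negSet C = C) (hDneg : negSet D = D) : C = D :=
  card_le_one.mp hP.2 C (mem_filter.mpr ⟨hC, hCneg⟩) D (mem_filter.mpr ⟨hD, hDneg⟩)

end IsSignedPartition

/-- The four axioms characterise the maps `repFun P` of signed partitions `P`
(see `signedPartitionEquivRepFun`). -/
structure IsRepFun (n : ℕ) (σ : ℤ → ℤ) : Prop where
  apply_of_notMem : ∀ x ∉ pmSet n, σ x = 0
  apply_neg : ∀ x, σ (-x) = -σ x
  abs_apply_le : ∀ x, |σ x| ≤ |x|
  apply_apply : ∀ x, σ (σ x) = σ x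

noncomputable def fixedPts (n : ℕ) (σ : ℤ → ℤ) : Finset ℤ := (pmSet n).filter fun x => σ x = x

noncomputable def repFun {n : ℕ} (P : Finpartition (pmSet n)) (x : ℤ) : ℤ :=
  if negSet (P.part x) = P.part x then 0 else absMinElt (P.part x)

section repFun

variable {n : ℕ} {P : Finpartition (pmSet n)}

lemma mem_pmSet_of_negSet_part_ne {x : ℤ} (h : negSet (P.part x) ≠ P.part x) : x ∈ pmSet n := by
  by_contra hx
  rw [P.part_eq_empty.mpr hx] at h
  exact h rfl

lemma repFun_eq_zero_iff {x : ℤ} : repFun P x = 0 ↔ negSet (P.part x) = P.part x := by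
  refine ⟨fun h => ?_, fun h => if_pos h⟩
  by_contra hneg
  have hmem := absMinElt_mem (P.part_nonempty.mpr (mem_pmSet_of_negSet_part_ne hneg))
  rw [repFun, if_neg hneg] at h
  exact zero_notMem_pmSet n (h ▸ P.part_subset x hmem)

lemma repFun_of_negSet_ne {x : ℤ} (h : negSet (P.part x) ≠ P.part x) :
    repFun P x = absMinElt (P.part x) :=
  if_neg h

lemma IsSignedPartition.isRepFun_repFun (hP : IsSignedPartition n P) :
    IsRepFun n (repFun P) where
  apply_of_notMem x hx := repFun_eq_zero_iff.mpr (by rw [P.part_eq_empty.mpr hx]; rfl)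
  apply_neg x := by
    by_cases h : negSet (P.part x) = P.part x
    · rw [repFun_eq_zero_iff.mpr h, neg_zero, repFun_eq_zero_iff, hP.part_neg, h, h]
    · have h' : negSet (P.part (-x)) ≠ P.part (-x) := by
        rw [hP.part_neg, negSet_negSet]; exact Ne.symm h
      rw [repFun_of_negSet_ne h, repFun_of_negSet_ne h', hP.part_neg,
        hP.absMinElt_negSet (P.part_mem.mpr (mem_pmSet_of_negSet_part_ne h)) h]
  abs_apply_le x := by
    by_cases h : negSet (P.part x) = P.part x
    · simp [repFun_eq_zero_iff.mpr h]
    · rw [repFun_of_negSet_ne h]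
      exact abs_absMinElt_le (P.mem_part (mem_pmSet_of_negSet_part_ne h))
  apply_apply x := by
    by_cases h : negSet (P.part x) = P.part x
    · rw [repFun_eq_zero_iff.mpr h]
      exact repFun_eq_zero_iff.mpr (by rw [P.part_eq_empty.mpr (zero_notMem_pmSet n)]; rfl)
    · have hx := mem_pmSet_of_negSet_part_ne h
      have hpart : P.part (absMinElt (P.part x)) = P.part x :=
        P.part_eq_of_mem (P.part_mem.mpr hx) (absMinElt_mem (P.part_nonempty.mpr hx))
      rw [repFun_of_negSet_ne h, repFun_of_negSet_ne (by rwa [hpart]), hpart]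

lemma IsSignedPartition.repFun_eq_repFun_iff (hP : IsSignedPartition n P) {x y : ℤ}
    (hx : x ∈ pmSet n) (hy : y ∈ pmSet n) : repFun P x = repFun P y ↔ P.part x = P.part y := by
  refine ⟨fun h => ?_, fun h => by rw [repFun, repFun, h]⟩
  have hxP := P.part_mem.mpr hx
  have hyP := P.part_mem.mpr hy
  by_cases h0 : repFun P x = 0
  · exact hP.eq_of_negSet_eq hxP hyP (repFun_eq_zero_iff.mp h0)
      (repFun_eq_zero_iff.mp (h ▸ h0))
  · have hx' : negSet (P.part x) ≠ P.part x := mt repFun_eq_zero_iff.mpr h0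
    have hy' : negSet (P.part y) ≠ P.part y := mt repFun_eq_zero_iff.mpr (h ▸ h0)
    rw [repFun_of_negSet_ne hx', repFun_of_negSet_ne hy'] at h
    exact P.eq_of_mem_parts hxP hyP (absMinElt_mem (P.nonempty_of_mem_parts hxP))
      (h ▸ absMinElt_mem (P.nonempty_of_mem_parts hyP))

lemma negSet_part_ne_of_repFun_eq_self {x : ℤ} (hx : x ∈ pmSet n) (hfix : repFun P x = x) :
    negSet (P.part x) ≠ P.part x := fun h => by
  rw [repFun_eq_zero_iff.mpr h] at hfix
  exact zero_notMem_pmSet n (hfix ▸ hx)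

lemma card_filter_negSet_ne_parts :
    #(P.parts.filter fun C => negSet C ≠ C) = #(fixedPts n (repFun P)) := by
  refine card_nbij' absMinElt P.part (fun C hC => ?_) (fun x hx => ?_) (fun C hC => ?_)
    (fun x hx => ?_)
  · obtain ⟨hCP, hCneg⟩ := mem_filter.mp hC
    have ha := absMinElt_mem (P.nonempty_of_mem_parts hCP)
    have hpart := P.part_eq_of_mem hCP ha
    refine mem_filter.mpr ⟨P.le hCP ha, ?_⟩
    rw [repFun_of_negSet_ne (by rwa [hpart]), hpart]
  · obtain ⟨hx, hfix⟩ := mem_filter.mp hx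
    exact mem_filter.mpr ⟨P.part_mem.mpr hx, negSet_part_ne_of_repFun_eq_self hx hfix⟩
  · obtain ⟨hCP, -⟩ := mem_filter.mp hC
    exact P.part_eq_of_mem hCP (absMinElt_mem (P.nonempty_of_mem_parts hCP))
  · obtain ⟨hx, hfix⟩ := mem_filter.mp hx
    rw [← repFun_of_negSet_ne (negSet_part_ne_of_repFun_eq_self hx hfix), hfix]

end repFun

open Classical in
noncomputable def ofRepFun (n : ℕ) (σ : ℤ → ℤ) : Finpartition (pmSet n) :=
  Finpartition.ofSetSetoid (Setoid.ker σ) (pmSet n)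

lemma mem_part_ofRepFun {n : ℕ} {σ : ℤ → ℤ} {x y : ℤ} :
    y ∈ (ofRepFun n σ).part x ↔ x ∈ pmSet n ∧ y ∈ pmSet n ∧ σ x = σ y :=
  by classical exact Finpartition.mem_part_ofSetSetoid_iff_rel _

namespace IsRepFun

variable {n : ℕ} {σ : ℤ → ℤ}

lemma apply_eq_zero_iff (hσ : IsRepFun n σ) (x : ℤ) : σ x = 0 ↔ σ (-x) = σ x := by
  rw [hσ.apply_neg]; omega

lemma apply_mem_pmSet (hσ : IsRepFun n σ) {x : ℤ} (hx : x ∈ pmSet n) (h0 : σ x ≠ 0) :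
    σ x ∈ pmSet n :=
  mem_pmSet.mpr ⟨h0, (hσ.abs_apply_le x).trans (mem_pmSet.mp hx).2⟩

lemma part_ofRepFun_eq {x y : ℤ} (hx : x ∈ pmSet n) (hy : y ∈ pmSet n) (h : σ x = σ y) :
    (ofRepFun n σ).part x = (ofRepFun n σ).part y := by
  ext z; simp only [mem_part_ofRepFun, h, hx, hy, true_and]

lemma negSet_part_ofRepFun (hσ : IsRepFun n σ) (x : ℤ) :
    negSet ((ofRepFun n σ).part x) = (ofRepFun n σ).part (-x) := by
  ext y
  simp only [mem_negSet, mem_part_ofRepFun, neg_mem_pmSet, hσ.apply_neg, neg_eq_iff_eq_neg]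

lemma negSet_part_ofRepFun_eq_iff (hσ : IsRepFun n σ) {x : ℤ} (hx : x ∈ pmSet n) :
    negSet ((ofRepFun n σ).part x) = (ofRepFun n σ).part x ↔ σ x = 0 := by
  rw [hσ.negSet_part_ofRepFun, hσ.apply_eq_zero_iff]
  constructor
  · intro h
    have := (ofRepFun n σ).mem_part (neg_mem_pmSet.mpr hx)
    rw [h, mem_part_ofRepFun] at this
    exact this.2.2.symm
  · exact fun h => part_ofRepFun_eq (neg_mem_pmSet.mpr hx) hx h

lemma isSignedPartition_ofRepFun (hσ : IsRepFun n σ) : IsSignedPartition n (ofRepFun n σ) := by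
  refine ⟨fun C hC => ?_, card_le_one.mpr fun C hC D hD => ?_⟩
  · obtain ⟨x, hx, rfl⟩ := (ofRepFun n σ).part_surjOn hC
    rw [hσ.negSet_part_ofRepFun]
    exact (ofRepFun n σ).part_mem.mpr (neg_mem_pmSet.mpr hx)
  · obtain ⟨hCP, hCneg⟩ := mem_filter.mp hC
    obtain ⟨hDP, hDneg⟩ := mem_filter.mp hD
    obtain ⟨x, hx, rfl⟩ := (ofRepFun n σ).part_surjOn hCP
    obtain ⟨y, hy, rfl⟩ := (ofRepFun n σ).part_surjOn hDP
    refine part_ofRepFun_eq hx hy ?_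
    rw [(hσ.negSet_part_ofRepFun_eq_iff hx).mp hCneg, (hσ.negSet_part_ofRepFun_eq_iff hy).mp hDneg]

lemma repFun_ofRepFun (hσ : IsRepFun n σ) : repFun (ofRepFun n σ) = σ := by
  funext x
  by_cases hx : x ∈ pmSet n
  · by_cases h0 : σ x = 0
    · rw [h0, repFun_eq_zero_iff, hσ.negSet_part_ofRepFun_eq_iff hx]; exact h0
    · rw [repFun_of_negSet_ne (mt (hσ.negSet_part_ofRepFun_eq_iff hx).mp h0)]
      refine absMinElt_eq ?_ (fun y hy => ?_) ?_
      · exact mem_part_ofRepFun.mpr ⟨hx, hσ.apply_mem_pmSet hx h0, (hσ.apply_apply x).symm⟩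
      · rw [(mem_part_ofRepFun.mp hy).2.2]; exact hσ.abs_apply_le y
      · rw [mem_part_ofRepFun, hσ.apply_neg, hσ.apply_apply]
        omega
  · rw [hσ.apply_of_notMem x hx, repFun_eq_zero_iff, (ofRepFun n σ).part_eq_empty.mpr hx]
    rfl

end IsRepFun

lemma IsSignedPartition.ofRepFun_repFun {n : ℕ} {P : Finpartition (pmSet n)}
    (hP : IsSignedPartition n P) : ofRepFun n (repFun P) = P := by
  refine Finpartition.ext_part fun x => ext fun y => ?_
  rw [mem_part_ofRepFun]
  by_cases hx : x ∈ pmSet n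
  · by_cases hy : y ∈ pmSet n
    · rw [hP.repFun_eq_repFun_iff hx hy, P.mem_part_iff_part_eq_part hy hx, eq_comm]
      simp [hx, hy]
    · exact iff_of_false (fun h => hy h.2.1) (fun h => hy (P.part_subset x h))
  · rw [P.part_eq_empty.mpr hx]; simp [hx]

abbrev RepFun (n k : ℕ) : Type := {σ : ℤ → ℤ // IsRepFun n σ ∧ #(fixedPts n σ) = 2 * k}

noncomputable def signedPartitionEquivRepFun (n k : ℕ) :
    {P : Finpartition (pmSet n) //
      IsSignedPartition n P ∧ (P.parts.filter fun C => negSet C ≠ C).card = 2 * k} ≃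
      RepFun n k where
  toFun P := ⟨repFun P.1, P.2.1.isRepFun_repFun, card_filter_negSet_ne_parts ▸ P.2.2⟩
  invFun σ := ⟨ofRepFun n σ.1, σ.2.1.isSignedPartition_ofRepFun, by
    rw [card_filter_negSet_ne_parts, σ.2.1.repFun_ofRepFun]; exact σ.2.2⟩
  left_inv P := Subtype.ext P.2.1.ofRepFun_repFun
  right_inv σ := Subtype.ext σ.2.1.repFun_ofRepFun

lemma SB_eq_card_repFun (n k : ℕ) : SB n k = Nat.card (RepFun n k) :=
  Nat.card_congr (signedPartitionEquivRepFun n k)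

instance (n k : ℕ) : Finite (RepFun n k) :=
  Finite.of_equiv _ (signedPartitionEquivRepFun n k)

def setPair (N v : ℤ) (σ : ℤ → ℤ) (x : ℤ) : ℤ := if x = N then v else if x = -N then -v else σ x

section setPair

variable {N v : ℤ} {σ : ℤ → ℤ}

lemma setPair_self : setPair N v σ N = v := if_pos rfl

lemma setPair_neg_self (hN : 0 < N) : setPair N v σ (-N) = -v := by
  rw [setPair, if_neg (by omega), if_pos rfl]

lemma setPair_of_ne {x : ℤ} (h₁ : x ≠ N) (h₂ : x ≠ -N) : setPair N v σ x = σ x := by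
  rw [setPair, if_neg h₁, if_neg h₂]

lemma setPair_of_abs_lt {x : ℤ} (h : |x| < N) : setPair N v σ x = σ x := by
  rw [abs_lt] at h; exact setPair_of_ne (by omega) (by omega)

lemma setPair_apply_neg (hN : 0 < N) (hσ : ∀ x, σ (-x) = -σ x) (x : ℤ) :
    setPair N v σ (-x) = -setPair N v σ x := by
  unfold setPair; split_ifs <;> first | omega | simp [hσ]

lemma setPair_setPair (w : ℤ) : setPair N v (setPair N w σ) = setPair N v σ := by
  funext x; unfold setPair; split_ifs <;> rfl

lemma setPair_eq_self (h₁ : σ N = v) (h₂ : σ (-N) = -v) : setPair N v σ = σ := by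
  funext x; unfold setPair; split_ifs with hx hx' <;> subst_vars <;> simp_all

end setPair

namespace IsRepFun

variable {n : ℕ} {σ : ℤ → ℤ}

lemma abs_apply_le_bound (hσ : IsRepFun n σ) (x : ℤ) : |σ x| ≤ n := by
  by_cases hx : x ∈ pmSet n
  · exact (hσ.abs_apply_le x).trans (mem_pmSet.mp hx).2
  · simp [hσ.apply_of_notMem x hx]

lemma abs_apply_lt_of_ne (hσ : IsRepFun (n + 1) σ) {x : ℤ} (h₁ : x ≠ n + 1) (h₂ : x ≠ -(n + 1)) :
    |σ x| < n + 1 := by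
  by_cases hx : x ∈ pmSet (n + 1)
  · have h := hσ.abs_apply_le x
    have hxn := (mem_pmSet.mp hx).2
    push_cast at hxn
    rcases abs_cases x with ⟨hx', -⟩ | ⟨hx', -⟩ <;> omega
  · simp [hσ.apply_of_notMem x hx]

lemma restrict (hσ : IsRepFun (n + 1) σ) : IsRepFun n (setPair (n + 1) 0 σ) where
  apply_of_notMem x hx := by
    rcases eq_or_ne x (n + 1) with rfl | h₁
    · exact setPair_self
    rcases eq_or_ne x (-(n + 1)) with rfl | h₂
    · rw [setPair_neg_self (by positivity), neg_zero]
    rw [setPair_of_ne h₁ h₂]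
    refine hσ.apply_of_notMem x ?_
    rw [pmSet_succ]; simp only [mem_insert, not_or]; exact ⟨h₁, h₂, hx⟩
  apply_neg := setPair_apply_neg (by positivity) hσ.apply_neg
  abs_apply_le x := by
    unfold setPair; split_ifs
    · simp
    · simp
    · exact hσ.abs_apply_le x
  apply_apply x := by
    by_cases h : x = n + 1 ∨ x = -(n + 1)
    · have h0 : setPair (n + 1) 0 σ x = 0 := by
        rcases h with rfl | rfl
        · exact setPair_self
        · rw [setPair_neg_self (by positivity), neg_zero]
      rw [h0, setPair_of_abs_lt (by simp),
        hσ.apply_of_notMem 0 (zero_notMem_pmSet _)]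
    · obtain ⟨h₁, h₂⟩ := not_or.mp h
      rw [setPair_of_ne h₁ h₂, setPair_of_abs_lt (hσ.abs_apply_lt_of_ne h₁ h₂),
        hσ.apply_apply]

lemma extend (hσ : IsRepFun n σ) {v : ℤ} (hv : v = n + 1 ∨ v ∈ insert 0 (fixedPts n σ)) :
    IsRepFun (n + 1) (setPair (n + 1) v σ) := by
  have hN : (0 : ℤ) < n + 1 := by positivity
  have hv_fix : v ≠ n + 1 → |v| < n + 1 ∧ σ v = v := fun hvN => by
    rcases hv with rfl | hv
    · exact absurd rfl hvN
    rcases mem_insert.mp hv with rfl | hv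
    · simpa using hσ.apply_of_notMem 0 (zero_notMem_pmSet n)
    obtain ⟨hvn, hfix⟩ := mem_filter.mp hv
    exact ⟨by linarith [(mem_pmSet.mp hvn).2], hfix⟩
  have hτneg := setPair_apply_neg (v := v) hN hσ.apply_neg
  have hτN : setPair (n + 1) v σ (setPair (n + 1) v σ (n + 1)) = setPair (n + 1) v σ (n + 1) := by
    rw [setPair_self]
    rcases eq_or_ne v (n + 1) with rfl | hvN
    · exact setPair_self
    · rw [setPair_of_abs_lt (hv_fix hvN).1, (hv_fix hvN).2]
  refine ⟨fun x hx => ?_, hτneg, fun x => ?_, fun x => ?_⟩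
  · rw [pmSet_succ] at hx
    simp only [mem_insert, not_or] at hx
    rw [setPair_of_ne hx.1 hx.2.1, hσ.apply_of_notMem x hx.2.2]
  · have hv_abs : |v| ≤ n + 1 := by
      rcases eq_or_ne v (n + 1) with rfl | hvN
      · exact (abs_of_pos hN).le
      · exact (hv_fix hvN).1.le
    unfold setPair
    split_ifs with h₁ h₂
    · rwa [h₁, abs_of_pos hN]
    · rwa [h₂, abs_neg, abs_neg, abs_of_pos hN]
    · exact hσ.abs_apply_le x
  · rcases eq_or_ne x (n + 1) with rfl | h₁
    · exact hτN
    rcases eq_or_ne x (-(n + 1)) with rfl | h₂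
    · rw [hτneg, hτneg, hτN]
    rw [setPair_of_ne h₁ h₂, setPair_of_abs_lt ((hσ.abs_apply_le_bound x).trans_lt (by omega)),
      hσ.apply_apply]

end IsRepFun

section fixedPts

variable {n : ℕ} {σ : ℤ → ℤ}

lemma fixedPts_setPair (v : ℤ) : fixedPts n (setPair (n + 1) v σ) = fixedPts n σ := by
  refine filter_congr fun x hx => ?_
  rw [setPair_of_abs_lt (by linarith [(mem_pmSet.mp hx).2])]

lemma card_fixedPts_succ (hσ : ∀ x, σ (-x) = -σ x) :
    #(fixedPts (n + 1) σ) = #(fixedPts n σ) + if σ (n + 1) = n + 1 then 2 else 0 := by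
  have hneg : σ (-(n + 1)) = -(n + 1) ↔ σ (n + 1) = n + 1 := by rw [hσ, neg_inj]
  have hN : (n : ℤ) + 1 ∉ pmSet n := natCast_succ_notMem_pmSet n
  have hN' : -((n : ℤ) + 1) ∉ pmSet n := by rwa [neg_mem_pmSet]
  rw [fixedPts, fixedPts, pmSet_succ, filter_insert, filter_insert]
  by_cases h : σ (n + 1) = n + 1
  · rw [if_pos h, if_pos (hneg.mpr h), if_pos h, card_insert_of_notMem, card_insert_of_notMem]
    · exact fun hmem => hN' (mem_filter.mp hmem).1
    · simp only [mem_insert, mem_filter, not_or]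
      exact ⟨by omega, fun hmem => hN hmem.1⟩
  · rw [if_neg h, if_neg (mt hneg.mp h), if_neg h, add_zero]

lemma zero_notMem_fixedPts : (0 : ℤ) ∉ fixedPts n σ :=
  fun h => zero_notMem_pmSet n (mem_filter.mp h).1

lemma natCast_succ_notMem_insert_zero_fixedPts : (n : ℤ) + 1 ∉ insert 0 (fixedPts n σ) := by
  rw [mem_insert, not_or]
  exact ⟨by omega, fun h => natCast_succ_notMem_pmSet n (mem_filter.mp h).1⟩

end fixedPts

namespace IsRepFun

variable {n : ℕ} {σ : ℤ → ℤ}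

lemma apply_succ_mem (hσ : IsRepFun (n + 1) σ) (h : σ (n + 1) ≠ n + 1) :
    σ (n + 1) ∈ insert 0 (fixedPts n σ) := by
  rcases eq_or_ne (σ (n + 1)) 0 with h0 | h0
  · exact h0 ▸ mem_insert_self _ _
  have hneg : σ (n + 1) ≠ -(n + 1) := fun hm => by
    have := hσ.apply_apply (n + 1)
    rw [hm, hσ.apply_neg, hm] at this
    omega
  have hbound := hσ.abs_apply_le_bound (n + 1)
  push_cast at hbound
  refine mem_insert_of_mem (mem_filter.mpr ⟨mem_pmSet.mpr ⟨h0, ?_⟩, hσ.apply_apply _⟩)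
  rcases abs_cases (σ (n + 1)) with ⟨ha, -⟩ | ⟨ha, -⟩ <;> omega

lemma card_fixedPts_restrict (hσ : IsRepFun (n + 1) σ) :
    #(fixedPts (n + 1) σ) =
      #(fixedPts n (setPair (n + 1) 0 σ)) + if σ (n + 1) = n + 1 then 2 else 0 := by
  rw [fixedPts_setPair, card_fixedPts_succ hσ.apply_neg]

lemma card_fixedPts_extend (hσ : IsRepFun n σ) (v : ℤ) :
    #(fixedPts (n + 1) (setPair (n + 1) v σ)) = #(fixedPts n σ) + if v = n + 1 then 2 else 0 := by
  rw [card_fixedPts_succ (setPair_apply_neg (by positivity) hσ.apply_neg), setPair_self,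
    fixedPts_setPair]

lemma setPair_restrict (hσ : IsRepFun (n + 1) σ) :
    setPair (n + 1) (σ (n + 1)) (setPair (n + 1) 0 σ) = σ := by
  rw [setPair_setPair, setPair_eq_self rfl (hσ.apply_neg _)]

lemma restrict_setPair (hσ : IsRepFun n σ) (v : ℤ) :
    setPair (n + 1) 0 (setPair (n + 1) v σ) = σ := by
  rw [setPair_setPair, setPair_eq_self (hσ.apply_of_notMem _ (natCast_succ_notMem_pmSet n))]
  rw [hσ.apply_of_notMem _ (by rw [neg_mem_pmSet]; exact natCast_succ_notMem_pmSet n), neg_zero]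

end IsRepFun

def repFunSuccFixEquiv (n k : ℕ) :
    {σ : RepFun (n + 1) (k + 1) // σ.1 (n + 1) = n + 1} ≃ RepFun n k where
  toFun σ := ⟨setPair (n + 1) 0 σ.1.1, σ.1.2.1.restrict, by
    have h := σ.1.2.1.card_fixedPts_restrict
    rw [if_pos σ.2, σ.1.2.2] at h
    omega⟩
  invFun τ := ⟨⟨setPair (n + 1) (n + 1) τ.1, τ.2.1.extend (Or.inl rfl), by
    rw [τ.2.1.card_fixedPts_extend, if_pos rfl, τ.2.2]; ring⟩, setPair_self⟩
  left_inv σ := Subtype.ext <| Subtype.ext <| σ.2 ▸ σ.1.2.1.setPair_restrict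
  right_inv τ := Subtype.ext (τ.2.1.restrict_setPair _)

def repFunSuccNonfixEquiv (n k : ℕ) :
    {σ : RepFun (n + 1) k // σ.1 (n + 1) ≠ n + 1} ≃
      Σ τ : RepFun n k, (insert 0 (fixedPts n τ.1) : Finset ℤ) where
  toFun σ := ⟨⟨setPair (n + 1) 0 σ.1.1, σ.1.2.1.restrict, by
    have h := σ.1.2.1.card_fixedPts_restrict
    rw [if_neg σ.2, σ.1.2.2] at h
    omega⟩,
    ⟨σ.1.1 (n + 1), by rw [fixedPts_setPair]; exact σ.1.2.1.apply_succ_mem σ.2⟩⟩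
  invFun p :=
    have hv : (p.2 : ℤ) ≠ n + 1 :=
      ne_of_mem_of_not_mem p.2.2 natCast_succ_notMem_insert_zero_fixedPts
    ⟨⟨setPair (n + 1) p.2 p.1.1, p.1.2.1.extend (Or.inr p.2.2), by
      rw [p.1.2.1.card_fixedPts_extend, if_neg hv, p.1.2.2, add_zero]⟩, setPair_self.trans_ne hv⟩
  left_inv σ := Subtype.ext <| Subtype.ext σ.1.2.1.setPair_restrict
  right_inv p := Sigma.subtype_ext (Subtype.ext (p.1.2.1.restrict_setPair _)) setPair_self

lemma card_repFun_succ (n k : ℕ) :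
    Nat.card (RepFun (n + 1) k) =
      Nat.card {σ : RepFun (n + 1) k // σ.1 (n + 1) = n + 1} +
        (2 * k + 1) * Nat.card (RepFun n k) := by
  have : Fintype (RepFun n k) := Fintype.ofFinite _
  rw [← Nat.card_congr (Equiv.sumCompl fun σ : RepFun (n + 1) k => σ.1 (n + 1) = n + 1),
    Nat.card_sum, Nat.card_congr (repFunSuccNonfixEquiv n k), Nat.card_sigma]
  simp_rw [Nat.card_eq_finsetCard, card_insert_of_notMem zero_notMem_fixedPts]
  rw [sum_congr rfl fun τ _ => by rw [τ.2.2], sum_const, card_univ, smul_eq_mul,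
    ← Nat.card_eq_fintype_card]
  ring

lemma SB_zero_zero : SB 0 0 = 1 := by
  rw [SB_eq_card_repFun, Nat.card_eq_one_iff_exists]
  refine ⟨⟨0, ⟨fun _ _ => rfl, fun _ => by simp, fun _ => by simp, fun _ => rfl⟩,
    by simp [fixedPts, pmSet_zero]⟩, fun τ => Subtype.ext (funext fun x => ?_)⟩
  exact τ.2.1.apply_of_notMem x (by simp [pmSet_zero])

lemma SB_eq_zero_of_lt {n k : ℕ} (h : n < k) : SB n k = 0 := by
  refine Nat.card_eq_zero.mpr (Or.inl ⟨fun P => ?_⟩)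
  have := (card_filter_le P.1.parts fun C => negSet C ≠ C).trans P.1.card_parts_le_card
  rw [P.2.2, card_pmSet] at this
  omega

lemma SB_succ_zero (n : ℕ) : SB (n + 1) 0 = SB n 0 := by
  have : IsEmpty {σ : RepFun (n + 1) 0 // σ.1 (n + 1) = n + 1} := ⟨fun σ => by
    have h := σ.1.2.1.card_fixedPts_restrict
    rw [if_pos σ.2, σ.1.2.2] at h
    omega⟩
  rw [SB_eq_card_repFun, SB_eq_card_repFun, card_repFun_succ, Nat.card_of_isEmpty]
  ring

lemma SB_succ_succ (n k : ℕ) : SB (n + 1) (k + 1) = SB n k + (2 * k + 3) * SB n (k + 1) := by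
  rw [SB_eq_card_repFun, SB_eq_card_repFun, SB_eq_card_repFun, card_repFun_succ,
    Nat.card_congr (repFunSuccFixEquiv n k)]
  ring

lemma mul_prod_range_sub_odd {R : Type*} [CommRing R] (x : R) (k : ℕ) :
    x * ∏ j ∈ range k, (x - (2 * j + 1)) =
      ∏ j ∈ range (k + 1), (x - (2 * j + 1)) + (2 * k + 1) * ∏ j ∈ range k, (x - (2 * j + 1)) := by
  rw [prod_range_succ]; ring

theorem pow_eq_sum_mul_prod_sub_odd_of_rec {R : Type*} [CommRing R] (c : ℕ → ℕ → ℕ)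
    (h₀ : c 0 0 = 1) (hlt : ∀ n k, n < k → c n k = 0) (hsucc₀ : ∀ n, c (n + 1) 0 = c n 0)
    (hsucc : ∀ n k, c (n + 1) (k + 1) = c n k + (2 * k + 3) * c n (k + 1)) (x : R) (n : ℕ) :
    x ^ n = ∑ k ∈ range (n + 1), (c n k : R) * ∏ j ∈ range k, (x - (2 * j + 1)) := by
  set B : ℕ → R := fun k => ∏ j ∈ range k, (x - (2 * j + 1))
  induction n with
  | zero => simp [h₀]
  | succ n ih =>
    set f : ℕ → R := fun k => (2 * k + 1) * (c n k : R) * B k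
    have hodd : ∑ k ∈ range (n + 1), f k = ∑ k ∈ range (n + 1), f (k + 1) + f 0 := by
      rw [← sum_range_succ', sum_range_succ f (n + 1)]
      simp [f, hlt n (n + 1) n.lt_succ_self]
    calc x ^ (n + 1) = ∑ k ∈ range (n + 1), (c n k : R) * (B (k + 1) + (2 * k + 1) * B k) := by
          rw [pow_succ', ih, mul_sum]
          exact sum_congr rfl fun k _ => by rw [mul_left_comm, mul_prod_range_sub_odd]
      _ = ∑ k ∈ range (n + 1), (c n k : R) * B (k + 1) + ∑ k ∈ range (n + 1), f k := by
          rw [← sum_add_distrib]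
          exact sum_congr rfl fun k _ => by ring
      _ = ∑ k ∈ range (n + 1), (c (n + 1) (k + 1) : R) * B (k + 1) + c (n + 1) 0 * B 0 := by
          rw [hodd, ← add_assoc, ← sum_add_distrib]
          congr 1
          · exact sum_congr rfl fun k _ => by simp only [f, hsucc]; push_cast; ring
          · simp [f, hsucc₀]
      _ = ∑ k ∈ range (n + 1 + 1), (c (n + 1) k : R) * B k :=
          (sum_range_succ' (fun k => (c (n + 1) k : R) * B k) (n + 1)).symm

/-- For every natural `n` and real `x`:
`x^n = Σ_{k=0}^{n} S_B(n,k) · [x]^B_k` where `[x]^B_k = (x-1)(x-3)⋯(x-2k+1)`. -/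
theorem typeB_stirling_falling_factorial (n : ℕ) (x : ℝ) :
    x ^ n = ∑ k ∈ Finset.range (n + 1),
      (SB n k : ℝ) * ∏ j ∈ Finset.range k, (x - (2 * j + 1)) :=
  pow_eq_sum_mul_prod_sub_odd_of_rec SB SB_zero_zero (fun _ _ => SB_eq_zero_of_lt) SB_succ_zero
    SB_succ_succ x n
end

section
/- For all natural numbers n, k, the Stirling number of type B of the second kind admits the explicit formula S_B(n,k) = (1/(2^k · k!)) · Σ_{j=0}^{k} (-1)^j · C(k,j) · (2k - 2j + 1)^n; equivalently, 2^k · k! · S_B(n,k) = Σ_{j=0}^{k} (-1)^j · C(k,j) · (2(k-j)+1)^n. -/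
/-!
Both sides satisfy the same recurrence in `n` with the same initial values. Writing
`T(n,k)` for the alternating sum, multiplying the summand by `2(k-j)+1 = (2k+1) - 2j` and
absorbing the factor `j` into the binomial coefficient via `j·C(k,j) = k·C(k-1,j-1)` gives
`T(n+1,k) = 2k·T(n,k-1) + (2k+1)·T(n,k)`, which is the recurrence of `2^k k! S_B(n,k)`.
-/

open Finset

/-- Type-B Stirling numbers of the second kind, defined by the recurrence
`S_B(n+1,k) = S_B(n,k-1) + (2k+1)·S_B(n,k)`, `S_B(n,0) = 1`, `S_B(0,k) = 0` for `k ≥ 1`. -/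
def SBrec : ℕ → ℕ → ℕ
  | _, 0 => 1
  | 0, _ + 1 => 0
  | n + 1, k + 1 => SBrec n k + (2 * (k + 1) + 1) * SBrec n (k + 1)

theorem sum_range_mul_alternating_choose {R : Type*} [CommRing R] (k : ℕ) (f : ℕ → R) :
    ∑ j ∈ range (k + 2), (j : R) * ((-1) ^ j * ((k + 1).choose j : R) * f j) =
      -(k + 1) * ∑ j ∈ range (k + 1), (-1) ^ j * (k.choose j : R) * f (j + 1) := by
  rw [sum_range_succ', mul_sum]
  simp only [Nat.cast_zero, zero_mul, add_zero]
  refine sum_congr rfl fun j _ => ?_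
  have absorb := congrArg (Nat.cast : ℕ → R) (Nat.add_one_mul_choose_eq k j)
  push_cast at absorb ⊢
  linear_combination ((-1 : R) ^ j * f (j + 1)) * absorb

def sbAlternatingSum (n k : ℕ) : ℤ :=
  ∑ j ∈ range (k + 1), (-1) ^ j * (k.choose j : ℤ) * (2 * ((k : ℤ) - j) + 1) ^ n

theorem sbAlternatingSum_zero_right (n : ℕ) : sbAlternatingSum n 0 = 1 := by
  simp [sbAlternatingSum]

theorem sbAlternatingSum_zero_succ (k : ℕ) : sbAlternatingSum 0 (k + 1) = 0 := by
  simpa [sbAlternatingSum] using Int.alternating_sum_range_choose_of_ne k.succ_ne_zero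

theorem sbAlternatingSum_succ_succ (n k : ℕ) :
    sbAlternatingSum (n + 1) (k + 1) =
      2 * (k + 1) * sbAlternatingSum n k + (2 * (k + 1) + 1) * sbAlternatingSum n (k + 1) := by
  have split : sbAlternatingSum (n + 1) (k + 1) =
      (2 * (k + 1) + 1) * sbAlternatingSum n (k + 1) -
        2 * ∑ j ∈ range (k + 2), (j : ℤ) * ((-1) ^ j * ((k + 1).choose j : ℤ) *
          (2 * ((k + 1 : ℕ) - (j : ℤ)) + 1) ^ n) := by
    simp only [sbAlternatingSum, mul_sum, ← sum_sub_distrib]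
    exact sum_congr rfl fun j _ => by push_cast; ring
  have shift : ∀ j : ℕ, (2 * ((k + 1 : ℕ) - ((j + 1 : ℕ) : ℤ)) + 1) = 2 * ((k : ℤ) - j) + 1 := by
    intro j; push_cast; ring
  rw [split, sum_range_mul_alternating_choose k (fun j => (2 * ((k + 1 : ℕ) - (j : ℤ)) + 1) ^ n)]
  simp only [shift, sbAlternatingSum]
  ring

/-- Explicit formula for the type-B Stirling numbers of the second kind:
`2^k · k! · S_B(n,k) = Σ_{j=0}^{k} (-1)^j · C(k,j) · (2(k-j)+1)^n`. -/
theorem SBrec_explicit_formula (n k : ℕ) :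
    (2 ^ k * Nat.factorial k * SBrec n k : ℤ) =
      ∑ j ∈ Finset.range (k + 1),
        (-1) ^ j * (Nat.choose k j : ℤ) * (2 * ((k : ℤ) - j) + 1) ^ n := by
  change _ = sbAlternatingSum n k
  induction n generalizing k with
  | zero =>
    cases k with
    | zero => simp [SBrec, sbAlternatingSum_zero_right]
    | succ k => simp [SBrec, sbAlternatingSum_zero_succ]
  | succ n ih =>
    cases k with
    | zero => simp [SBrec, sbAlternatingSum_zero_right]
    | succ k =>
      rw [sbAlternatingSum_succ_succ, ← ih k, ← ih (k + 1), SBrec, Nat.factorial_succ]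
      push_cast
      ring
end

section
/- For all natural numbers n and k, S_B(n,k) = Σ_{j=k}^{n} C(n,j) · 2^{j-k} · S(j,k), where S(j,k) is the ordinary Stirling number of the second kind and C(n,j) the binomial coefficient. -/
open Finset

/-- `stirling n k`: the Stirling number of the second kind, the number of set
partitions of an `n`-element set into exactly `k` (nonempty) blocks. -/
noncomputable def stirling (n k : ℕ) : ℕ :=
  Nat.card {P : Finpartition (Finset.range n) // P.parts.card = k}

/-!
Multiplying by `2 ^ k` removes the truncated exponent `j - k`: it suffices that
`2 ^ k * S_B(n,k) = ∑ j ≤ n, C(n,j) * 2 ^ j * S(j,k)`. The right-hand side satisfies the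
recurrence of the left-hand side by Pascal's rule and `S(j+1,k+1) = (k+1) S(j,k+1) + S(j,k)`.
For the partition count `stirling` this recurrence is the usual bijection: a new element either
forms a singleton block or joins one of the `k + 1` blocks of a partition of the others; so
`stirling` is Mathlib's `Nat.stirlingSecond`.
-/

namespace Finpartition

theorem parts_avoid_of_mem {α : Type*} [GeneralizedBooleanAlgebra α] [DecidableEq α] {a t : α}
    (P : Finpartition a) (ht : t ∈ P.parts) : (P.avoid t).parts = P.parts.erase t := by
  ext c
  rw [mem_avoid, mem_erase]
  constructor
  · rintro ⟨d, hd, hdt, rfl⟩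
    have hne : d ≠ t := fun h => hdt h.le
    have hdisj : Disjoint d t := P.disjoint hd ht hne
    rw [hdisj.sdiff_eq_left]
    exact ⟨hne, hd⟩
  · rintro ⟨hne, hc⟩
    have hdisj : Disjoint c t := P.disjoint hc ht hne
    exact ⟨c, hc, fun h => P.ne_bot hc (hdisj.eq_bot_of_le h), hdisj.sdiff_eq_left⟩

variable {α : Type*} [DecidableEq α] {s u t d : Finset α} {a : α}

section AvoidSingleton

variable (Q : Finpartition u)

theorem notMem_of_ne_part (hd : d ∈ Q.parts) (hne : d ≠ Q.part a) : a ∉ d :=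
  fun had => hne (Q.part_eq_of_mem hd had).symm

theorem parts_avoid_singleton_of_part_eq (h : Q.part a = {a}) :
    (Q.avoid {a}).parts = Q.parts.erase {a} := by
  have ha : a ∈ u := Q.mem_part_self.1 (h ▸ mem_singleton_self a)
  exact Q.parts_avoid_of_mem (h ▸ Q.part_mem.2 ha)

theorem parts_avoid_singleton_of_part_ne (ha : a ∈ u) (h : Q.part a ≠ {a}) :
    (Q.avoid {a}).parts = insert ((Q.part a).erase a) (Q.parts.erase (Q.part a)) := by
  have hsub {d} (hd : d ∈ Q.parts) : d ⊆ {a} ↔ d = {a} :=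
    (Q.nonempty_of_mem_parts hd).subset_singleton_iff
  ext c
  rw [mem_avoid, mem_insert, mem_erase]
  constructor
  · rintro ⟨d, hd, hda, rfl⟩
    by_cases hdt : d = Q.part a
    · exact .inl (hdt ▸ sdiff_singleton_eq_erase a d)
    · rw [sdiff_singleton_eq_erase, erase_eq_of_notMem (Q.notMem_of_ne_part hd hdt)]
      exact .inr ⟨hdt, hd⟩
  · rintro (rfl | ⟨hne, hc⟩)
    · have hpart := Q.part_mem.2 ha
      exact ⟨_, hpart, (hsub hpart).not.2 h, sdiff_singleton_eq_erase a _⟩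
    · have hac := Q.notMem_of_ne_part hc hne
      refine ⟨c, hc, ?_, by rw [sdiff_singleton_eq_erase, erase_eq_of_notMem hac]⟩
      rw [hsub hc]
      rintro rfl
      exact hac (mem_singleton_self a)

theorem erase_part_notMem_parts (ha : a ∈ u) (h : Q.part a ≠ {a}) :
    (Q.part a).erase a ∉ Q.parts := by
  intro hc
  have hpart := Q.mem_part ha
  have hdisj := Q.disjoint hc (Q.part_mem.2 ha) (erase_ssubset hpart).ne
  have hne := (erase_nonempty hpart).2 ((nontrivial_iff_ne_singleton hpart).2 h)
  exact hne.ne_empty (hdisj.eq_bot_of_le (erase_subset a _))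

end AvoidSingleton

section InsertElement

variable (P : Finpartition s)

theorem notMem_of_mem_parts (ha : a ∉ s) (hd : d ∈ P.parts) : a ∉ d :=
  fun had => ha (P.le hd had)

def insertSingletonPart (ha : a ∉ s) : Finpartition (insert a s) :=
  P.extend (singleton_ne_empty a) (disjoint_singleton_right.2 ha)
    (by rw [sup_eq_union, union_comm, ← insert_eq])

def insertIntoPart (ha : a ∉ s) (ht : t ∈ P.parts) : Finpartition (insert a s) :=
  (P.avoid t).extend (insert_ne_empty a t)
    (disjoint_insert_right.2 ⟨fun h => ha (mem_sdiff.1 h).1, sdiff_disjoint⟩)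
    (by rw [sup_eq_union, union_insert, sdiff_union_of_subset (P.le ht)])

theorem parts_insertSingletonPart (ha : a ∉ s) :
    (P.insertSingletonPart ha).parts = insert {a} P.parts := rfl

theorem parts_insertIntoPart (ha : a ∉ s) (ht : t ∈ P.parts) :
    (P.insertIntoPart ha ht).parts = insert (insert a t) (P.parts.erase t) := by
  rw [insertIntoPart, extend_parts, parts_avoid_of_mem P ht]

theorem insert_notMem_parts (ha : a ∉ s) (t : Finset α) : insert a t ∉ P.parts :=
  fun h => P.notMem_of_mem_parts ha h (mem_insert_self a t)

theorem insert_ne_singleton_of_mem_parts (ha : a ∉ s) (ht : t ∈ P.parts) :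
    insert a t ≠ {a} := by
  intro h
  obtain ⟨x, hx⟩ := P.nonempty_of_mem_parts ht
  have hxa : x = a := mem_singleton.1 (h ▸ mem_insert_of_mem hx)
  exact P.notMem_of_mem_parts ha ht (hxa ▸ hx)

@[simp]
theorem card_parts_insertSingletonPart (ha : a ∉ s) :
    #(P.insertSingletonPart ha).parts = #P.parts + 1 :=
  card_extend ..

@[simp]
theorem card_parts_insertIntoPart (ha : a ∉ s) (ht : t ∈ P.parts) :
    #(P.insertIntoPart ha ht).parts = #P.parts := by
  rw [parts_insertIntoPart,
    card_insert_of_notMem fun h => P.insert_notMem_parts ha t (mem_of_mem_erase h),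
    card_erase_add_one ht]

theorem part_insertSingletonPart (ha : a ∉ s) : (P.insertSingletonPart ha).part a = {a} :=
  part_eq_of_mem _ (mem_insert_self _ _) (mem_singleton_self a)

theorem part_insertIntoPart (ha : a ∉ s) (ht : t ∈ P.parts) :
    (P.insertIntoPart ha ht).part a = insert a t :=
  part_eq_of_mem _ (mem_insert_self _ _) (mem_insert_self a t)

def ofInsert (Q : Finpartition (insert a s)) (ha : a ∉ s) : Finpartition s :=
  (Q.avoid {a}).copy <| by
    rw [insert_sdiff_of_mem _ (mem_singleton_self a), sdiff_singleton_eq_erase,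
      erase_eq_of_notMem ha]

theorem parts_ofInsert (Q : Finpartition (insert a s)) (ha : a ∉ s) :
    (Q.ofInsert ha).parts = (Q.avoid {a}).parts := rfl

theorem ofInsert_insertSingletonPart (ha : a ∉ s) :
    (P.insertSingletonPart ha).ofInsert ha = P := by
  ext : 1
  rw [parts_ofInsert, parts_avoid_singleton_of_part_eq _ (P.part_insertSingletonPart ha),
    parts_insertSingletonPart,
    erase_insert (fun h => P.notMem_of_mem_parts ha h (mem_singleton_self a))]

theorem ofInsert_insertIntoPart (ha : a ∉ s) (ht : t ∈ P.parts) :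
    (P.insertIntoPart ha ht).ofInsert ha = P := by
  ext : 1
  rw [parts_ofInsert, parts_avoid_singleton_of_part_ne _ (mem_insert_self a s)
      (P.part_insertIntoPart ha ht ▸ P.insert_ne_singleton_of_mem_parts ha ht),
    P.part_insertIntoPart ha ht, parts_insertIntoPart,
    erase_insert (P.notMem_of_mem_parts ha ht),
    erase_insert (fun h => P.insert_notMem_parts ha t (mem_of_mem_erase h)), insert_erase ht]

theorem insertSingletonPart_ofInsert (Q : Finpartition (insert a s)) (ha : a ∉ s)
    (h : Q.part a = {a}) : (Q.ofInsert ha).insertSingletonPart ha = Q := by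
  ext : 1
  rw [parts_insertSingletonPart, parts_ofInsert, parts_avoid_singleton_of_part_eq _ h,
    insert_erase (h ▸ Q.part_mem.2 (mem_insert_self a s))]

theorem erase_part_mem_parts_ofInsert (Q : Finpartition (insert a s)) (ha : a ∉ s)
    (h : Q.part a ≠ {a}) : (Q.part a).erase a ∈ (Q.ofInsert ha).parts := by
  rw [parts_ofInsert, parts_avoid_singleton_of_part_ne _ (mem_insert_self a s) h]
  exact mem_insert_self _ _

theorem insertIntoPart_ofInsert (Q : Finpartition (insert a s)) (ha : a ∉ s)
    (h : Q.part a ≠ {a}) :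
    (Q.ofInsert ha).insertIntoPart ha (Q.erase_part_mem_parts_ofInsert ha h) = Q := by
  have has := mem_insert_self a s
  ext : 1
  rw [parts_insertIntoPart, parts_ofInsert, parts_avoid_singleton_of_part_ne _ has h,
    insert_erase (Q.mem_part has),
    erase_insert (fun h' => Q.erase_part_notMem_parts has h (mem_of_mem_erase h')),
    insert_erase (Q.part_mem.2 has)]

def insertElem (ha : a ∉ s) (k : ℕ) :
    {P : Finpartition s // #P.parts = k} ⊕
      (Σ P : {P : Finpartition s // #P.parts = k + 1}, P.1.parts) →
    {Q : Finpartition (insert a s) // #Q.parts = k + 1}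
  | .inl P => ⟨P.1.insertSingletonPart ha, by rw [card_parts_insertSingletonPart, P.2]⟩
  | .inr ⟨P, t⟩ => ⟨P.1.insertIntoPart ha t.2, by rw [card_parts_insertIntoPart, P.2]⟩

theorem insertElem_injective (ha : a ∉ s) (k : ℕ) : Function.Injective (insertElem ha k) := by
  rintro (⟨P, _⟩ | ⟨⟨P, _⟩, t, ht⟩) (⟨P', _⟩ | ⟨⟨P', _⟩, t', ht'⟩) h <;>
    have hrestrict := congrArg (fun Q => Q.1.ofInsert ha) h <;>
    have hpart := congrArg (fun Q => Q.1.part a) h <;>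
    simp only [insertElem, ofInsert_insertSingletonPart, ofInsert_insertIntoPart,
      part_insertSingletonPart, part_insertIntoPart] at hrestrict hpart
  · subst hrestrict; rfl
  · exact absurd hpart.symm (P'.insert_ne_singleton_of_mem_parts ha ht')
  · exact absurd hpart (P.insert_ne_singleton_of_mem_parts ha ht)
  · subst hrestrict
    obtain rfl : t = t' := by
      rw [← erase_insert (P.notMem_of_mem_parts ha ht), hpart,
        erase_insert (P.notMem_of_mem_parts ha ht')]
    rfl

theorem insertElem_surjective (ha : a ∉ s) (k : ℕ) : Function.Surjective (insertElem ha k) := by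
  rintro ⟨Q, hQ⟩
  by_cases h : Q.part a = {a}
  · have hQ' := Q.insertSingletonPart_ofInsert ha h
    refine ⟨.inl ⟨Q.ofInsert ha, ?_⟩, Subtype.ext hQ'⟩
    have := congrArg (#·.parts) hQ'
    simp only [card_parts_insertSingletonPart, hQ] at this
    omega
  · have hQ' := Q.insertIntoPart_ofInsert ha h
    refine ⟨.inr ⟨⟨Q.ofInsert ha, ?_⟩, ⟨_, Q.erase_part_mem_parts_ofInsert ha h⟩⟩,
      Subtype.ext hQ'⟩
    have := congrArg (#·.parts) hQ'
    simpa only [card_parts_insertIntoPart, hQ] using this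

theorem card_subtype_card_parts_insert (ha : a ∉ s) (k : ℕ) :
    Nat.card {Q : Finpartition (insert a s) // #Q.parts = k + 1} =
      (k + 1) * Nat.card {P : Finpartition s // #P.parts = k + 1} +
        Nat.card {P : Finpartition s // #P.parts = k} := by
  rw [← Nat.card_eq_of_bijective _ ⟨insertElem_injective ha k, insertElem_surjective ha k⟩,
    Nat.card_sum, Nat.card_sigma]
  simp only [Nat.card_eq_fintype_card, Fintype.card_coe]
  rw [sum_congr rfl fun P _ => P.2, sum_const, card_univ, smul_eq_mul, add_comm, mul_comm]

end InsertElement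

end Finpartition

theorem stirling_zero_zero : stirling 0 0 = 1 := by
  rw [stirling, range_zero, Nat.card_eq_one_iff_unique]
  have : Unique (Finpartition (∅ : Finset ℕ)) := inferInstanceAs (Unique (Finpartition ⊥))
  exact ⟨inferInstance, ⟨⟨Finpartition.empty _, rfl⟩⟩⟩

theorem stirling_zero_succ (k : ℕ) : stirling 0 (k + 1) = 0 := by
  rw [stirling, Nat.card_eq_zero]
  refine .inl ⟨fun ⟨P, hP⟩ => ?_⟩
  have := P.card_parts_le_card
  simp_all

theorem stirling_succ_zero (n : ℕ) : stirling (n + 1) 0 = 0 := by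
  rw [stirling, Nat.card_eq_zero]
  refine .inl ⟨fun ⟨P, hP⟩ => ?_⟩
  rw [card_eq_zero, Finpartition.parts_eq_empty_iff] at hP
  simp at hP

theorem stirling_succ_succ (n k : ℕ) :
    stirling (n + 1) (k + 1) = (k + 1) * stirling n (k + 1) + stirling n k := by
  unfold stirling
  rw [range_add_one]
  exact Finpartition.card_subtype_card_parts_insert notMem_range_self k

theorem stirling_eq_stirlingSecond : ∀ n k, stirling n k = Nat.stirlingSecond n k
  | 0, 0 => stirling_zero_zero
  | 0, k + 1 => stirling_zero_succ k
  | n + 1, 0 => stirling_succ_zero n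
  | n + 1, k + 1 => by
    rw [stirling_succ_succ, Nat.stirlingSecond_succ_succ, stirling_eq_stirlingSecond n k,
      stirling_eq_stirlingSecond n (k + 1)]

theorem two_pow_mul_SBrec (n k : ℕ) :
    2 ^ k * SBrec n k = ∑ j ∈ range (n + 1), n.choose j * 2 ^ j * Nat.stirlingSecond j k := by
  induction n generalizing k with
  | zero => cases k <;> simp [SBrec]
  | succ n ih =>
    cases k with
    | zero => simp [SBrec, sum_range_succ']
    | succ k =>
      have hpascal := sum_choose_succ_mul (fun j _ => 2 ^ j * Nat.stirlingSecond j (k + 1)) n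
      simp only [Nat.cast_id, ← mul_assoc] at hpascal
      calc 2 ^ (k + 1) * SBrec (n + 1) (k + 1)
          = 2 * (2 ^ k * SBrec n k) + (2 * (k + 1) + 1) * (2 ^ (k + 1) * SBrec n (k + 1)) := by
            rw [SBrec]; ring
        _ = _ := by
            rw [ih, ih, hpascal]
            simp only [mul_sum, ← sum_add_distrib]
            refine sum_congr rfl fun j _ => ?_
            rw [Nat.stirlingSecond_succ_succ]
            ring

/-- `S_B(n,k) = Σ_{j=k}^{n} C(n,j) · 2^{j-k} · S(j,k)`, relating the type-B
Stirling numbers of the second kind to the ordinary ones. -/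
theorem SBrec_eq_sum_stirling (n k : ℕ) :
    SBrec n k = ∑ j ∈ Finset.Icc k n,
      Nat.choose n j * 2 ^ (j - k) * stirling j k := by
  refine Nat.eq_of_mul_eq_mul_left (pow_pos two_pos k) ?_
  calc 2 ^ k * SBrec n k = ∑ j ∈ range (n + 1), n.choose j * 2 ^ j * stirling j k := by
        simp only [two_pow_mul_SBrec, stirling_eq_stirlingSecond]
    _ = ∑ j ∈ Icc k n, n.choose j * 2 ^ j * stirling j k := by
        refine (sum_subset (fun j hj => mem_range_succ_iff.2 (mem_Icc.1 hj).2) ?_).symm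
        intro j hjn hjk
        have hjk : j < k := by simp only [mem_range, mem_Icc] at hjn hjk; omega
        rw [stirling_eq_stirlingSecond, Nat.stirlingSecond_eq_zero_of_lt hjk, mul_zero]
    _ = 2 ^ k * ∑ j ∈ Icc k n, n.choose j * 2 ^ (j - k) * stirling j k := by
        rw [mul_sum]
        refine sum_congr rfl fun j hj => ?_
        obtain ⟨i, rfl⟩ := Nat.exists_eq_add_of_le (mem_Icc.1 hj).1
        rw [Nat.add_sub_cancel_left, pow_add]
        ring
end
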